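/- arXiv:0902.0614 — 3 statements merged into one kernel-verified Lean document; each statement's English description precedes it below -/
import Mathlib

section
/- Let G be a finite connected bipartite graph with parts V⁺ and V⁻ and a positive edge-weight function R with weights around each vertex summing to 2. Then for every subset A ⊆ V⁺ with A ≠ ∅ and A ≠ V⁺, the strict inequality |N(A)| > |A| holds. -/
/-! Summing the weights `R` over the edges leaving `A` gives `2|A|`, and over the edges entering
`N(A)` gives `2|N(A)|`. The first set of edges is contained in the second, and by connectedness
the containment is strict: some edge joins `N(A)` to a vertex outside `A`. Positivity of `R`
turns this into `2|A| < 2|N(A)|`. -/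

open Finset

/-- The simple graph on `P ⊕ N` determined by the bipartite edge set `E ⊆ P × N`. -/
def tilingGraph {P N : Type*} (E : Finset (P × N)) : SimpleGraph (P ⊕ N) :=
  SimpleGraph.fromRel (fun a b => ∃ p n, (p, n) ∈ E ∧ a = Sum.inl p ∧ b = Sum.inr n)

lemma sum_filter_mem_eq_card_nsmul {ι κ M : Type*} [DecidableEq κ] [AddCommMonoid M]
    (s : Finset ι) (t : Finset κ) (g : ι → κ) (f : ι → M) {c : M}
    (hc : ∀ j ∈ t, ∑ i ∈ s with g i = j, f i = c) :
    ∑ i ∈ s with g i ∈ t, f i = t.card • c := by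
  rw [← sum_fiberwise_eq_sum_filter, sum_congr rfl hc, sum_const]

section tilingGraph

variable {P N : Type*} {E : Finset (P × N)}

lemma tilingGraph_adj_inl_inr {p : P} {n : N} :
    (tilingGraph E).Adj (Sum.inl p) (Sum.inr n) ↔ (p, n) ∈ E := by
  simp [tilingGraph]

lemma tilingGraph_adj_inr_inl {p : P} {n : N} :
    (tilingGraph E).Adj (Sum.inr n) (Sum.inl p) ↔ (p, n) ∈ E := by
  simp [tilingGraph]

lemma tilingGraph_not_adj_inl_inl {p p' : P} : ¬(tilingGraph E).Adj (Sum.inl p) (Sum.inl p') := by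
  simp [tilingGraph]

lemma tilingGraph_not_adj_inr_inr {n n' : N} : ¬(tilingGraph E).Adj (Sum.inr n) (Sum.inr n') := by
  simp [tilingGraph]

lemma exists_edge_from_compl_into_image_of_connected [Fintype P] [DecidableEq P] [DecidableEq N]
    (hconn : (tilingGraph E).Connected)
    {A : Finset P} (hne : A.Nonempty) (hproper : A ≠ univ) :
    ∃ e ∈ E, e.1 ∉ A ∧ e.2 ∈ (E.filter (fun e => e.1 ∈ A)).image Prod.snd := by
  set B := (E.filter (fun e => e.1 ∈ A)).image Prod.snd
  obtain ⟨a, ha⟩ := hne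
  obtain ⟨p, -, hp⟩ := exists_of_ssubset (ssubset_univ_iff.2 hproper)
  obtain ⟨walk⟩ := hconn.preconnected (Sum.inl a) (Sum.inl p)
  obtain ⟨⟨⟨u, v⟩, hadj⟩, -, hu, hv⟩ :=
    walk.exists_boundary_dart {x | Sum.elim (· ∈ A) (· ∈ B) x} ha hp
  rcases u with p' | n' <;> rcases v with p'' | n''
  · exact absurd hadj tilingGraph_not_adj_inl_inl
  · exact absurd (mem_image_of_mem Prod.snd
      (mem_filter.2 ⟨tilingGraph_adj_inl_inr.1 hadj, hu⟩)) hv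
  · exact ⟨(p'', n'), tilingGraph_adj_inr_inl.1 hadj, hv, hu⟩
  · exact absurd hadj tilingGraph_not_adj_inr_inr

end tilingGraph

theorem strict_hall_condition_general {P N : Type*} [Fintype P]
    [DecidableEq P] [DecidableEq N]
    (E : Finset (P × N)) (R : P × N → ℝ)
    (hconn : (tilingGraph E).Connected)
    (hpos : ∀ e ∈ E, 0 < R e)
    (hwhite : ∀ p : P, ∑ e ∈ E.filter (fun e => e.1 = p), R e = 2)
    (hblack : ∀ n : N, ∑ e ∈ E.filter (fun e => e.2 = n), R e = 2)
    (A : Finset P) (hne : A.Nonempty) (hproper : A ≠ Finset.univ) :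
    A.card < ((E.filter (fun e => e.1 ∈ A)).image Prod.snd).card := by
  set B := (E.filter (fun e => e.1 ∈ A)).image Prod.snd
  have hsumA : ∑ e ∈ E with e.1 ∈ A, R e = A.card • 2 :=
    sum_filter_mem_eq_card_nsmul E A Prod.fst R fun p _ => hwhite p
  have hsumB : ∑ e ∈ E with e.2 ∈ B, R e = B.card • 2 :=
    sum_filter_mem_eq_card_nsmul E B Prod.snd R fun n _ => hblack n
  have hsub : E.filter (fun e => e.1 ∈ A) ⊆ E.filter (fun e => e.2 ∈ B) := fun e he =>
    mem_filter.2 ⟨(mem_filter.1 he).1, mem_image_of_mem Prod.snd he⟩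
  obtain ⟨e, heE, heA, heB⟩ := exists_edge_from_compl_into_image_of_connected hconn hne hproper
  have hlt : ∑ e ∈ E with e.1 ∈ A, R e < ∑ e ∈ E with e.2 ∈ B, R e :=
    sum_lt_sum_of_subset hsub (mem_filter.2 ⟨heE, heB⟩) (by simp [heA]) (hpos e heE)
      fun j hj _ => (hpos j (mem_filter.1 hj).1).le
  rw [hsumA, hsumB, nsmul_eq_mul, nsmul_eq_mul] at hlt
  exact_mod_cast lt_of_mul_lt_mul_right hlt zero_le_two

/-- In a finite connected bipartite graph with positive edge weights summing to
`2` around every vertex, every nonempty proper subset `A` of white vertices satisfies the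
strict Hall inequality `|A| < |N(A)|`. -/
theorem strict_hall_condition {P N : Type*} [Fintype P] [Fintype N]
    [DecidableEq P] [DecidableEq N]
    (E : Finset (P × N)) (R : P × N → ℝ)
    (hconn : (tilingGraph E).Connected)
    (hpos : ∀ e ∈ E, 0 < R e)
    (hwhite : ∀ p : P, ∑ e ∈ E.filter (fun e => e.1 = p), R e = 2)
    (hblack : ∀ n : N, ∑ e ∈ E.filter (fun e => e.2 = n), R e = 2)
    (A : Finset P) (hne : A.Nonempty) (hproper : A ≠ Finset.univ) :
    A.card < ((E.filter (fun e => e.1 ∈ A)).image Prod.snd).card :=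
  strict_hall_condition_general E R hconn hpos hwhite hblack A hne hproper
end

section
/- Let G be a finite bipartite graph with parts V⁺ and V⁻ together with a face structure: a collection F of closed walks (faces) such that each edge of G lies in exactly two faces. Suppose R : E → ℝ satisfies ∑_{e ∋ v} R(e) = 2 for every vertex and ∑_{e ∈ ∂f} R(e) = |∂f| − 2 for every face f ∈ F. Then |V⁺| + |V⁻| − |E| + |F| = 0. -/
/-! Summing the vertex conditions over one colour class counts every edge once, so
`∑ R = 2|V⁺| = 2|V⁻|`; summing the face conditions counts every edge twice, so
`2 ∑ R = 2|E| - 2|F|`. Together, `|V⁺| + |V⁻| = ∑ R = |E| - |F|`. -/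

open Finset

theorem Finset.sum_eq_card_nsmul_of_sum_fiber_eq {α ι M : Type*} [Fintype ι] [DecidableEq ι]
    [AddCommMonoid M] (s : Finset α) (π : α → ι) (g : α → M) (c : M)
    (hfiber : ∀ i, ∑ a ∈ s.filter (fun a => π a = i), g a = c) :
    ∑ a ∈ s, g a = Fintype.card ι • c := by
  rw [← sum_fiberwise s π g, sum_congr rfl fun i _ => hfiber i, sum_const, card_univ]

theorem Finset.sum_sum_eq_nsmul_of_card_filter_mem {α ι M : Type*} [Fintype ι] [DecidableEq α]
    [AddCommMonoid M] (s : Finset α) (t : ι → Finset α) (g : α → M) (n : ℕ)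
    (hts : ∀ i, t i ⊆ s) (hn : ∀ a ∈ s, (univ.filter (fun i => a ∈ t i)).card = n) :
    ∑ i, ∑ a ∈ t i, g a = n • ∑ a ∈ s, g a := by
  rw [sum_comm' (t' := s) (s' := fun a => univ.filter (fun i => a ∈ t i))
    (fun i a => by simpa using fun h => hts i h), smul_sum]
  exact sum_congr rfl fun a ha => by rw [sum_const, hn a ha]

/-- Abstract conformality conditions force vanishing Euler characteristic:
if `R` sums to `2` around every vertex and to `|∂f| - 2` around every face, each edge lying
in exactly two faces, then `|V⁺| + |V⁻| - |E| + |F| = 0`. -/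
theorem euler_characteristic_zero' {P N F : Type*}
    [Fintype P] [Fintype N] [Fintype F]
    [DecidableEq P] [DecidableEq N]
    (E : Finset (P × N)) (bd : F → Finset (P × N)) (R : P × N → ℝ)
    (hbd : ∀ f : F, bd f ⊆ E)
    (htwo : ∀ e ∈ E, (Finset.univ.filter (fun f : F => e ∈ bd f)).card = 2)
    (hwhite : ∀ p : P, ∑ e ∈ E.filter (fun e => e.1 = p), R e = 2)
    (hblack : ∀ n : N, ∑ e ∈ E.filter (fun e => e.2 = n), R e = 2)
    (hface : ∀ f : F, ∑ e ∈ bd f, R e = ((bd f).card : ℝ) - 2) :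
    (Fintype.card P + Fintype.card N : ℤ) - E.card + Fintype.card F = 0 := by
  have hP := sum_eq_card_nsmul_of_sum_fiber_eq E Prod.fst R 2 hwhite
  have hN := sum_eq_card_nsmul_of_sum_fiber_eq E Prod.snd R 2 hblack
  have hR := sum_sum_eq_nsmul_of_card_filter_mem E bd R 2 hbd htwo
  have hcard := sum_sum_eq_nsmul_of_card_filter_mem E bd (fun _ => (1 : ℝ)) 2 hbd htwo
  have hfaces : ∑ f, ∑ e ∈ bd f, R e = ∑ f, ((bd f).card : ℝ) - 2 * Fintype.card F := by
    simp [hface, sum_sub_distrib, mul_comm]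
  simp only [sum_const, nsmul_eq_mul, mul_one, Nat.cast_ofNat] at hP hN hR hcard
  have : (Fintype.card P + Fintype.card N - E.card + Fintype.card F : ℝ) = 0 := by
    linarith
  exact_mod_cast this
end

section
/- Let G be a finite bipartite graph with parts V⁺ and V⁻ admitting a positive edge weight function R with vertex sums equal to 2, and assume G is connected with at least 4 vertices. Then G has at least two distinct perfect matchings. -/
/-!
The weights make Hall's condition hold with room to spare: the edges leaving a set `S ⊆ P`
carry weight `2|S|` and all land among the edges at its neighbourhood `T`, which carry `2|T|`,
so `|S| ≤ |T|`, strictly as soon as some edge into `T` does not start in `S`. Hence deleting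
the endpoints of any edge leaves a graph satisfying Hall's condition, and every edge lies in a
perfect matching. A connected graph on at least three vertices has two distinct edges at a
common vertex, and perfect matchings through these two edges must differ.
-/

open Finset

/-- A perfect matching of the bipartite graph with edge set `E ⊆ P × N`. -/
def IsPerfectMatching {P N : Type*} [DecidableEq P] [DecidableEq N]
    (E M : Finset (P × N)) : Prop :=
  M ⊆ E ∧ (∀ p : P, (M.filter (fun e => e.1 = p)).card = 1) ∧
    (∀ n : N, (M.filter (fun e => e.2 = n)).card = 1)

theorem SimpleGraph.Connected.natCard_le_two {V : Type*} [Finite V] {G : SimpleGraph V}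
    (hG : G.Connected) (huniq : ∀ a b c, G.Adj a b → G.Adj a c → b = c) :
    Nat.card V ≤ 2 := by
  have hwalk : ∀ {a b : V}, G.Walk a b → b = a ∨ G.Adj a b := by
    intro a b w
    induction w with
    | nil => exact Or.inl rfl
    | @cons a x b hax _ ih =>
      rcases ih with rfl | hxb
      · exact Or.inr hax
      · exact Or.inl (huniq x b a hxb hax.symm)
  obtain ⟨v⟩ := hG.nonempty
  have hcover : Set.univ ⊆ insert v (G.neighborSet v) := fun u _ =>
    hwalk (hG.preconnected v u).some
  have hsub : (G.neighborSet v).ncard ≤ 1 :=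
    Set.ncard_le_one_iff_subsingleton.2 fun b hb c hc => huniq v b c hb hc
  calc Nat.card V = (Set.univ : Set V).ncard := Set.ncard_univ V |>.symm
    _ ≤ (insert v (G.neighborSet v)).ncard := Set.ncard_le_ncard hcover
    _ ≤ 2 := (Set.ncard_insert_le _ _).trans (by omega)

section TilingGraph

variable {P N : Type*}

theorem tilingGraph_adj {E : Finset (P × N)} {a b : P ⊕ N} :
    (tilingGraph E).Adj a b ↔ ∃ p n, (p, n) ∈ E ∧
      (a = .inl p ∧ b = .inr n ∨ a = .inr n ∧ b = .inl p) := by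
  simp only [tilingGraph, SimpleGraph.fromRel_adj]
  constructor
  · rintro ⟨-, ⟨p, n, h, ha, hb⟩ | ⟨p, n, h, hb, ha⟩⟩
    · exact ⟨p, n, h, .inl ⟨ha, hb⟩⟩
    · exact ⟨p, n, h, .inr ⟨ha, hb⟩⟩
  · rintro ⟨p, n, h, ⟨rfl, rfl⟩ | ⟨rfl, rfl⟩⟩
    · exact ⟨Sum.inl_ne_inr, .inl ⟨p, n, h, rfl, rfl⟩⟩
    · exact ⟨Sum.inr_ne_inl, .inr ⟨p, n, h, rfl, rfl⟩⟩

theorem exists_ne_edges_sharing_vertex [Finite P] [Finite N] {E : Finset (P × N)}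
    (hconn : (tilingGraph E).Connected) (hcard : 3 ≤ Nat.card P + Nat.card N) :
    ∃ e₁ ∈ E, ∃ e₂ ∈ E, e₁ ≠ e₂ ∧ (e₁.1 = e₂.1 ∨ e₁.2 = e₂.2) := by
  by_contra! hdisj
  have hfst : ∀ {p n n'}, (p, n) ∈ E → (p, n') ∈ E → n = n' := fun h h' => by
    by_contra hne; exact (hdisj _ h _ h' (by simpa using hne)).1 rfl
  have hsnd : ∀ {p p' n}, (p, n) ∈ E → (p', n) ∈ E → p = p' := fun h h' => by
    by_contra hne; exact (hdisj _ h _ h' (by simpa using hne)).2 rfl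
  have := hconn.natCard_le_two fun a b c hab hac => by
    obtain ⟨p, n, h, ⟨rfl, rfl⟩ | ⟨rfl, rfl⟩⟩ := tilingGraph_adj.1 hab <;>
    obtain ⟨p', n', h', ⟨hp, rfl⟩ | ⟨hn, rfl⟩⟩ := tilingGraph_adj.1 hac <;>
    simp only [Sum.inl.injEq, Sum.inr.injEq, reduceCtorEq] at *
    · subst hp; rw [hfst h h']
    · subst hn; rw [hsnd h h']
  rw [Nat.card_sum] at this
  omega

end TilingGraph

section Matching

variable {P N : Type*} [DecidableEq P] [DecidableEq N] {E M : Finset (P × N)}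

theorem IsPerfectMatching.eq_of_fst_eq (hM : IsPerfectMatching E M) {e₁ e₂ : P × N}
    (h₁ : e₁ ∈ M) (h₂ : e₂ ∈ M) (h : e₁.1 = e₂.1) : e₁ = e₂ :=
  card_le_one.1 (hM.2.1 e₁.1).le e₁ (mem_filter.2 ⟨h₁, rfl⟩) e₂ (mem_filter.2 ⟨h₂, h.symm⟩)

theorem IsPerfectMatching.eq_of_snd_eq (hM : IsPerfectMatching E M) {e₁ e₂ : P × N}
    (h₁ : e₁ ∈ M) (h₂ : e₂ ∈ M) (h : e₁.2 = e₂.2) : e₁ = e₂ :=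
  card_le_one.1 (hM.2.2 e₁.2).le e₁ (mem_filter.2 ⟨h₁, rfl⟩) e₂ (mem_filter.2 ⟨h₂, h.symm⟩)

theorem isPerfectMatching_image_equiv [Fintype P] (f : P ≃ N) (hf : ∀ p, (p, f p) ∈ E) :
    IsPerfectMatching E (univ.image fun p => (p, f p)) := by
  refine ⟨fun e he => ?_, fun p => card_eq_one.2 ⟨(p, f p), ?_⟩,
    fun n => card_eq_one.2 ⟨(f.symm n, n), ?_⟩⟩
  · obtain ⟨p, -, rfl⟩ := mem_image.1 he
    exact hf p
  · ext ⟨q, m⟩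
    simp only [mem_filter, mem_image, mem_univ, true_and, mem_singleton, Prod.mk.injEq]
    constructor
    · rintro ⟨⟨q, rfl, rfl⟩, rfl⟩; exact ⟨rfl, rfl⟩
    · rintro ⟨rfl, rfl⟩; exact ⟨⟨q, rfl, rfl⟩, rfl⟩
  · ext ⟨q, m⟩
    simp only [mem_filter, mem_image, mem_univ, true_and, mem_singleton, Prod.mk.injEq]
    constructor
    · rintro ⟨⟨q, rfl, rfl⟩, rfl⟩; exact ⟨(f.symm_apply_apply q).symm, rfl⟩
    · rintro ⟨rfl, rfl⟩; exact ⟨⟨_, rfl, f.apply_symm_apply _⟩, rfl⟩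

end Matching

structure IsRegularWeighting {P N : Type*} [DecidableEq P] [DecidableEq N]
    (E : Finset (P × N)) (R : P × N → ℝ) (c : ℝ) : Prop where
  pos : ∀ e ∈ E, 0 < R e
  sum_fst : ∀ p : P, ∑ e ∈ E.filter (fun e => e.1 = p), R e = c
  sum_snd : ∀ n : N, ∑ e ∈ E.filter (fun e => e.2 = n), R e = c

def nbhd {P N : Type*} [DecidableEq P] [DecidableEq N] [Fintype N] (E : Finset (P × N)) (S : Finset P) : Finset N :=
  {n | ∃ p ∈ S, (p, n) ∈ E}

namespace IsRegularWeighting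

variable {P N : Type*} [DecidableEq P] [DecidableEq N] {E : Finset (P × N)} {R : P × N → ℝ}
  {c : ℝ}

theorem sum_fst_mem (h : IsRegularWeighting E R c) (S : Finset P) :
    ∑ e ∈ E.filter (fun e => e.1 ∈ S), R e = c * #S := by
  rw [← sum_fiberwise_eq_sum_filter E S Prod.fst R, sum_congr rfl fun p _ => h.sum_fst p,
    sum_const, nsmul_eq_mul, mul_comm]

theorem sum_snd_mem (h : IsRegularWeighting E R c) (T : Finset N) :
    ∑ e ∈ E.filter (fun e => e.2 ∈ T), R e = c * #T := by
  rw [← sum_fiberwise_eq_sum_filter E T Prod.snd R, sum_congr rfl fun n _ => h.sum_snd n,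
    sum_const, nsmul_eq_mul, mul_comm]

theorem card_eq_card [Fintype P] [Fintype N] (h : IsRegularWeighting E R c) (hc : c ≠ 0) :
    Fintype.card P = Fintype.card N := by
  have hP := h.sum_fst_mem univ
  have hN := h.sum_snd_mem univ
  simp only [mem_univ, filter_true, card_univ] at hP hN
  exact_mod_cast mul_left_cancel₀ hc (hP.symm.trans hN)

variable [Fintype N]

theorem filter_fst_mem_subset (S : Finset P) :
    E.filter (fun e => e.1 ∈ S) ⊆ E.filter (fun e => e.2 ∈ nbhd E S) := fun e he => by
  obtain ⟨heE, heS⟩ := mem_filter.1 he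
  exact mem_filter.2 ⟨heE, by simpa [nbhd] using ⟨e.1, heS, heE⟩⟩

theorem card_le_card_nbhd (h : IsRegularWeighting E R c) (hc : 0 < c) (S : Finset P) :
    #S ≤ #(nbhd E S) := by
  have : c * #S ≤ c * #(nbhd E S) := by
    rw [← h.sum_fst_mem, ← h.sum_snd_mem]
    exact sum_le_sum_of_subset_of_nonneg (filter_fst_mem_subset S)
      fun e he _ => (h.pos e (mem_filter.1 he).1).le
  exact_mod_cast le_of_mul_le_mul_left this hc

theorem card_lt_card_nbhd (h : IsRegularWeighting E R c) (hc : 0 < c) {S : Finset P}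
    {e₀ : P × N} (he₀ : e₀ ∈ E) (hS : e₀.1 ∉ S) (hT : e₀.2 ∈ nbhd E S) :
    #S < #(nbhd E S) := by
  have : c * #S < c * #(nbhd E S) := by
    rw [← h.sum_fst_mem, ← h.sum_snd_mem]
    exact sum_lt_sum_of_subset (filter_fst_mem_subset S) (mem_filter.2 ⟨he₀, hT⟩)
      (fun he => hS (mem_filter.1 he).2) (h.pos e₀ he₀)
      fun e he _ => (h.pos e (mem_filter.1 he).1).le
  exact_mod_cast lt_of_mul_lt_mul_left this hc.le

theorem card_le_card_nbhd_erase (h : IsRegularWeighting E R c) (hc : 0 < c) {S : Finset P}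
    {p₀ : P} {n₀ : N} (he₀ : (p₀, n₀) ∈ E) (hS : p₀ ∉ S) :
    #S ≤ #((nbhd E S).erase n₀) := by
  by_cases hn₀ : n₀ ∈ nbhd E S
  · have := h.card_lt_card_nbhd hc he₀ hS hn₀
    rw [card_erase_of_mem hn₀]
    omega
  · rw [erase_eq_of_notMem hn₀]
    exact h.card_le_card_nbhd hc S

end IsRegularWeighting

namespace IsRegularWeighting

variable {P N : Type*} [Fintype P] [Fintype N] [DecidableEq P] [DecidableEq N]
  {E : Finset (P × N)} {R : P × N → ℝ} {c : ℝ}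

theorem exists_isPerfectMatching_mem (h : IsRegularWeighting E R c) (hc : 0 < c)
    {e₀ : P × N} (he₀ : e₀ ∈ E) : ∃ M, IsPerfectMatching E M ∧ e₀ ∈ M := by
  obtain ⟨p₀, n₀⟩ := e₀
  -- A matching of `P` into `N` along `r` must use `(p₀, n₀)`; Hall's condition for `r` reduces
  -- to the strict Hall inequality for the sets avoiding `p₀`.
  let r : P → N → Prop := fun p n => (p, n) ∈ E ∧ (p = p₀ ↔ n = n₀)
  let img : Finset P → Finset N := fun S => {n | ∃ p ∈ S, r p n}
  have himg : ∀ S, p₀ ∉ S → img S = (nbhd E S).erase n₀ := by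
    intro S hS
    ext n
    simp only [img, r, nbhd, mem_filter, mem_univ, true_and, mem_erase]
    constructor
    · rintro ⟨p, hp, hpn, hiff⟩
      exact ⟨fun hn => hS (hiff.2 hn ▸ hp), p, hp, hpn⟩
    · rintro ⟨hn, p, hp, hpn⟩
      exact ⟨p, hp, hpn, iff_of_false (fun h => hS (h ▸ hp)) hn⟩
  have hall : ∀ S, #S ≤ #(img S) := by
    intro S
    by_cases hS : p₀ ∈ S
    · have hlt : img (S.erase p₀) ⊂ img S := by
        refine (ssubset_iff_of_subset fun n hn => ?_).2 ⟨n₀, ?_, ?_⟩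
        · obtain ⟨p, hp, hpn⟩ := (mem_filter.1 hn).2
          exact mem_filter.2 ⟨mem_univ n, p, mem_of_mem_erase hp, hpn⟩
        · exact mem_filter.2 ⟨mem_univ n₀, p₀, hS, he₀, iff_of_true rfl rfl⟩
        · rw [himg _ (notMem_erase p₀ S)]
          exact notMem_erase n₀ _
      have := h.card_le_card_nbhd_erase hc he₀ (notMem_erase p₀ S)
      have := card_lt_card hlt
      have := card_erase_add_one hS
      rw [himg _ (notMem_erase p₀ S)] at *
      omega
    · exact (himg S hS).symm ▸ h.card_le_card_nbhd_erase hc he₀ hS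
  obtain ⟨f, hinj, hf⟩ := (Fintype.all_card_le_filter_rel_iff_exists_injective r).1 hall
  have hbij := (Fintype.bijective_iff_injective_and_card f).2 ⟨hinj, h.card_eq_card hc.ne'⟩
  refine ⟨_, isPerfectMatching_image_equiv (.ofBijective f hbij) fun p => (hf p).1, ?_⟩
  exact mem_image.2 ⟨p₀, mem_univ _, by simpa using (hf p₀).2.1 rfl⟩

end IsRegularWeighting

/-- A finite connected bipartite graph on at least 4 vertices admitting a
positive edge-weight function with vertex sums `2` has at least two distinct perfect
matchings. -/
theorem two_perfect_matchings {P N : Type*} [Fintype P] [Fintype N]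
    [DecidableEq P] [DecidableEq N]
    (E : Finset (P × N)) (R : P × N → ℝ)
    (hconn : (tilingGraph E).Connected)
    (hbig : 4 ≤ Fintype.card P + Fintype.card N)
    (hpos : ∀ e ∈ E, 0 < R e)
    (hwhite : ∀ p : P, ∑ e ∈ E.filter (fun e => e.1 = p), R e = 2)
    (hblack : ∀ n : N, ∑ e ∈ E.filter (fun e => e.2 = n), R e = 2) :
    ∃ M₁ M₂ : Finset (P × N),
      IsPerfectMatching E M₁ ∧ IsPerfectMatching E M₂ ∧ M₁ ≠ M₂ := by
  have hR : IsRegularWeighting E R 2 := ⟨hpos, hwhite, hblack⟩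
  obtain ⟨e₁, he₁, e₂, he₂, hne, hshare⟩ :=
    exists_ne_edges_sharing_vertex hconn (by simp only [Nat.card_eq_fintype_card]; omega)
  obtain ⟨M₁, hM₁, he₁M⟩ := hR.exists_isPerfectMatching_mem two_pos he₁
  obtain ⟨M₂, hM₂, he₂M⟩ := hR.exists_isPerfectMatching_mem two_pos he₂
  refine ⟨M₁, M₂, hM₁, hM₂, ?_⟩
  rintro rfl
  rcases hshare with h | h
  · exact hne (hM₁.eq_of_fst_eq he₁M he₂M h)
  · exact hne (hM₁.eq_of_snd_eq he₁M he₂M h)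
end
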